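/- Let K be a positive integer, let D = diag(d₁,…,d_K) with d₁ ≥ ⋯ ≥ d_K ≥ 0, and let A ∈ ℝ^{K×K} be symmetric positive definite with condition number κ = λ_max(A)/λ_min(A), where λ_max(A) and λ_min(A) are its largest and smallest eigenvalues. Let U ∈ ℝ^{K×K} be an orthogonal matrix whose s-th column is an eigenvector of D A D associated with Λ_s(D A D) for every s ∈ {1,…,K} (columns ordered so that the associated eigenvalues are non-increasing). Then for all r, s ∈ {1,…,K} with d_{min(r,s)} > 0, |U_{rs}| ≤ κ · d_{max(r,s)} / d_{min(r,s)}, where d_{max(r,s)} and d_{min(r,s)} denote the diagonal entries of D at indices max(r,s) and min(r,s). -/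

import Mathlib

open Matrix BigOperators

/-- The `k`-th largest eigenvalue (0-indexed: `k = 0` is the largest) of a
Hermitian real matrix, counted with multiplicity. -/
noncomputable def eigsDesc {n : ℕ} {A : Matrix (Fin n) (Fin n) ℝ} (hA : A.IsHermitian)
    (k : Fin n) : ℝ :=
  (hA.eigenvalues ∘ Tuple.sort hA.eigenvalues) k.rev

/-!
Write `N = D A D`, let `u_s` be the `s`-th column of `U` and `Λ_s` its eigenvalue, and let
`λ_min ≤ λ_max` be the extreme eigenvalues of `A`, so that `κ = λ_max / λ_min`.

Restricting the Courant–Fischer principle to the coordinate subspaces `span(e_1, …, e_t)` and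
`span(e_t, …, e_K)` gives Ostrowski-type bounds `λ_min d_t² ≤ Λ_t ≤ λ_max d_t²`.
For `r ≤ s`, `λ_min (d_r U_rs)² ≤ ⟨D u_s, A D u_s⟩ = Λ_s ≤ λ_max d_s²`.
For `s < r`, row `r` of the eigen-equation reads `Λ_s U_rs = d_r (A D u_s)_r`, and
`‖A D u_s‖² ≤ λ_max ⟨D u_s, A D u_s⟩ = λ_max Λ_s`; hence `Λ_s U_rs² ≤ λ_max d_r²`, while
`Λ_s ≥ λ_min d_s²`. Either way `(d_min U_rs)² ≤ κ d_max²`, and `√κ ≤ κ`.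
-/

theorem Finset.sum_mul_sq_le_sum_mul_sq {ι : Type*} [Fintype ι] {f g x : ι → ℝ}
    (h : ∀ i, x i ≠ 0 → f i ≤ g i) : ∑ i, f i * x i ^ 2 ≤ ∑ i, g i * x i ^ 2 :=
  Finset.sum_le_sum fun i _ => by
    by_cases hx : x i = 0
    · simp [hx]
    · exact mul_le_mul_of_nonneg_right (h i hx) (sq_nonneg _)

namespace Matrix

section DotProduct

variable {ι : Type*} [Fintype ι]

theorem dotProduct_self_eq_sum_sq (x : ι → ℝ) : x ⬝ᵥ x = ∑ i, x i ^ 2 := by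
  simp only [dotProduct, sq]

theorem dotProduct_self_pos {x : ι → ℝ} (hx : x ≠ 0) : 0 < x ⬝ᵥ x := by
  simpa using dotProduct_self_star_pos_iff.mpr hx

theorem sq_le_dotProduct_self (x : ι → ℝ) (i : ι) : x i ^ 2 ≤ x ⬝ᵥ x := by
  rw [dotProduct_self_eq_sum_sq]
  exact Finset.single_le_sum (f := fun j => x j ^ 2) (fun j _ => sq_nonneg _) (Finset.mem_univ i)

theorem dotProduct_mulVec_eq_of_mulVec_eq_smul {N : Matrix ι ι ℝ} {u : ι → ℝ} {μ : ℝ}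
    (hu : u ⬝ᵥ u = 1) (hNu : N *ᵥ u = μ • u) : u ⬝ᵥ N *ᵥ u = μ := by
  rw [hNu, dotProduct_smul, hu, smul_eq_mul, mul_one]

end DotProduct

section Orthogonal

variable {ι : Type*} [Fintype ι] [DecidableEq ι] {V N : Matrix ι ι ℝ} {μ : ι → ℝ}

theorem mul_eq_mul_diagonal_of_mulVec_col {Λ : ι → ℝ}
    (h : ∀ j, N *ᵥ (fun i => V i j) = Λ j • fun i => V i j) : N * V = V * diagonal Λ := by
  ext i j
  rw [mul_diagonal]
  simpa [mul_apply, mulVec, dotProduct, mul_comm] using congrFun (h j) i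

theorem dotProduct_mulVec_orthogonal (hV : Vᵀ * V = 1) (a b : ι → ℝ) :
    (V *ᵥ a) ⬝ᵥ (V *ᵥ b) = a ⬝ᵥ b := by
  rw [dotProduct_mulVec, ← vecMul_transpose, vecMul_vecMul, ← dotProduct_mulVec, hV, one_mulVec]

theorem dotProduct_mulVec_eigenbasis (hV : Vᵀ * V = 1) (hNV : N * V = V * diagonal μ)
    (c : ι → ℝ) : (V *ᵥ c) ⬝ᵥ N *ᵥ (V *ᵥ c) = ∑ i, μ i * c i ^ 2 := by
  rw [mulVec_mulVec, hNV, ← mulVec_mulVec, dotProduct_mulVec_orthogonal hV]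
  simp only [dotProduct, mulVec_diagonal]
  exact Finset.sum_congr rfl fun i _ => by ring

theorem mulVec_ne_zero_of_orthogonal (hV : Vᵀ * V = 1) {c : ι → ℝ} (hc : c ≠ 0) :
    V *ᵥ c ≠ 0 := fun h => (dotProduct_self_pos hc).ne' <| by
  rw [← dotProduct_mulVec_orthogonal hV, h, zero_dotProduct]

theorem col_dotProduct_col_of_orthogonal (hV : Vᵀ * V = 1) (j : ι) :
    (fun i => V i j) ⬝ᵥ (fun i => V i j) = 1 := by
  simpa [mul_apply, dotProduct] using congrFun (congrFun hV j) j

theorem exists_mulVec_eq_of_orthogonal (hV : Vᵀ * V = 1) (x : ι → ℝ) : ∃ c, x = V *ᵥ c :=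
  ⟨Vᵀ *ᵥ x, by rw [mulVec_mulVec, mul_eq_one_comm.mp hV, one_mulVec]⟩

end Orthogonal

namespace IsHermitian

variable {ι : Type*} [Fintype ι] [DecidableEq ι] {A : Matrix ι ι ℝ} (hA : A.IsHermitian) {m M : ℝ}
include hA

theorem exists_orthogonal_eigenbasis :
    ∃ V : Matrix ι ι ℝ, Vᵀ * V = 1 ∧ A * V = V * diagonal hA.eigenvalues :=
  ⟨hA.eigenvectorUnitary,
    by simpa [star_eq_conjTranspose] using Unitary.coe_star_mul_self hA.eigenvectorUnitary,
    mul_eq_mul_diagonal_of_mulVec_col hA.mulVec_eigenvectorBasis⟩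

theorem mul_dotProduct_self_le (hm : ∀ i, m ≤ hA.eigenvalues i) (x : ι → ℝ) :
    m * (x ⬝ᵥ x) ≤ x ⬝ᵥ A *ᵥ x := by
  obtain ⟨V, hV, hAV⟩ := hA.exists_orthogonal_eigenbasis
  obtain ⟨c, rfl⟩ := exists_mulVec_eq_of_orthogonal hV x
  rw [dotProduct_mulVec_eigenbasis hV hAV, dotProduct_mulVec_orthogonal hV,
    dotProduct_self_eq_sum_sq, Finset.mul_sum]
  exact Finset.sum_mul_sq_le_sum_mul_sq fun i _ => hm i

theorem dotProduct_mulVec_le (hM : ∀ i, hA.eigenvalues i ≤ M) (x : ι → ℝ) :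
    x ⬝ᵥ A *ᵥ x ≤ M * (x ⬝ᵥ x) := by
  obtain ⟨V, hV, hAV⟩ := hA.exists_orthogonal_eigenbasis
  obtain ⟨c, rfl⟩ := exists_mulVec_eq_of_orthogonal hV x
  rw [dotProduct_mulVec_eigenbasis hV hAV, dotProduct_mulVec_orthogonal hV,
    dotProduct_self_eq_sum_sq, Finset.mul_sum]
  exact Finset.sum_mul_sq_le_sum_mul_sq fun i _ => hM i

theorem mulVec_dotProduct_mulVec_le (h0 : ∀ i, 0 ≤ hA.eigenvalues i)
    (hM : ∀ i, hA.eigenvalues i ≤ M) (x : ι → ℝ) :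
    (A *ᵥ x) ⬝ᵥ (A *ᵥ x) ≤ M * (x ⬝ᵥ A *ᵥ x) := by
  obtain ⟨V, hV, hAV⟩ := hA.exists_orthogonal_eigenbasis
  obtain ⟨c, rfl⟩ := exists_mulVec_eq_of_orthogonal hV x
  have hAVc : A *ᵥ (V *ᵥ c) = V *ᵥ (diagonal hA.eigenvalues *ᵥ c) := by
    rw [mulVec_mulVec, hAV, mulVec_mulVec]
  rw [hAVc, dotProduct_mulVec_orthogonal hV, ← hAVc, dotProduct_mulVec_eigenbasis hV hAV,
    dotProduct_self_eq_sum_sq, Finset.mul_sum]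
  simp_rw [mulVec_diagonal, mul_pow, ← mul_assoc]
  exact Finset.sum_mul_sq_le_sum_mul_sq fun i _ => by
    rw [sq]
    exact mul_le_mul_of_nonneg_right (hM i) (h0 i)

end IsHermitian

theorem exists_ne_zero_supported_mulVec_supported {ι : Type*} [Fintype ι] [DecidableEq ι]
    (U : Matrix ι ι ℝ) (S T : Finset ι) (h : Fintype.card ι < S.card + T.card) :
    ∃ c ≠ 0, (∀ j ∉ S, c j = 0) ∧ ∀ i ∉ T, (U *ᵥ c) i = 0 := by
  let f : (ι → ℝ) →ₗ[ℝ] (↥Sᶜ → ℝ) × (↥Tᶜ → ℝ) :=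
    (LinearMap.funLeft ℝ ℝ Subtype.val).prod (LinearMap.funLeft ℝ ℝ Subtype.val ∘ₗ U.mulVecLin)
  have hf : LinearMap.ker f ≠ ⊥ := LinearMap.ker_ne_bot_of_finrank_lt <| by
    simp only [Module.finrank_prod, Module.finrank_fintype_fun_eq_card, Fintype.card_coe,
      Finset.card_compl]
    have := S.card_le_univ
    have := T.card_le_univ
    omega
  obtain ⟨c, hc, hc0⟩ := Submodule.exists_mem_ne_zero_of_ne_bot hf
  rw [LinearMap.mem_ker, Prod.ext_iff] at hc
  exact ⟨c, hc0, fun j hj => congrFun hc.1 ⟨j, Finset.mem_compl.2 hj⟩,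
    fun i hi => congrFun hc.2 ⟨i, Finset.mem_compl.2 hi⟩⟩

section CourantFischer

variable {n : ℕ} {U N : Matrix (Fin n) (Fin n) ℝ} {Λ : Fin n → ℝ}

theorem exists_dotProduct_mulVec_le_eigenvalue (hU : Uᵀ * U = 1)
    (hNU : N * U = U * diagonal Λ) (hΛ : Antitone Λ) (t : Fin n) :
    ∃ x ≠ 0, (∀ i, t < i → x i = 0) ∧ x ⬝ᵥ N *ᵥ x ≤ Λ t * (x ⬝ᵥ x) := by
  obtain ⟨c, hc0, hcS, hcT⟩ := exists_ne_zero_supported_mulVec_supported U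
    (Finset.Ici t) (Finset.Iic t) (by
      simp only [Fintype.card_fin, Fin.card_Ici, Fin.card_Iic]
      omega)
  refine ⟨U *ᵥ c, mulVec_ne_zero_of_orthogonal hU hc0,
    fun i hi => hcT i (by simpa using hi), ?_⟩
  rw [dotProduct_mulVec_eigenbasis hU hNU, dotProduct_mulVec_orthogonal hU,
    dotProduct_self_eq_sum_sq, Finset.mul_sum]
  exact Finset.sum_mul_sq_le_sum_mul_sq fun i hi =>
    hΛ (not_lt.1 fun h => hi (hcS i (by simpa using h)))

theorem exists_eigenvalue_le_dotProduct_mulVec (hU : Uᵀ * U = 1)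
    (hNU : N * U = U * diagonal Λ) (hΛ : Antitone Λ) (t : Fin n) :
    ∃ x ≠ 0, (∀ i, i < t → x i = 0) ∧ Λ t * (x ⬝ᵥ x) ≤ x ⬝ᵥ N *ᵥ x := by
  obtain ⟨c, hc0, hcS, hcT⟩ := exists_ne_zero_supported_mulVec_supported U
    (Finset.Iic t) (Finset.Ici t) (by
      simp only [Fintype.card_fin, Fin.card_Ici, Fin.card_Iic]
      omega)
  refine ⟨U *ᵥ c, mulVec_ne_zero_of_orthogonal hU hc0,
    fun i hi => hcT i (by simpa using hi), ?_⟩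
  rw [dotProduct_mulVec_eigenbasis hU hNU, dotProduct_mulVec_orthogonal hU,
    dotProduct_self_eq_sum_sq, Finset.mul_sum]
  exact Finset.sum_mul_sq_le_sum_mul_sq fun i hi =>
    hΛ (not_lt.1 fun h => hi (hcS i (by simpa using h)))

end CourantFischer

section DiagonalConj

variable {ι : Type*} [Fintype ι] [DecidableEq ι] {d : ι → ℝ} {A : Matrix ι ι ℝ} {m M : ℝ}

theorem diagonal_mulVec_dotProduct_self (d x : ι → ℝ) :
    (diagonal d *ᵥ x) ⬝ᵥ (diagonal d *ᵥ x) = ∑ i, d i ^ 2 * x i ^ 2 := by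
  simp only [dotProduct_self_eq_sum_sq, mulVec_diagonal, mul_pow]

theorem dotProduct_diagonal_conj_mulVec (d : ι → ℝ) (A : Matrix ι ι ℝ) (x : ι → ℝ) :
    x ⬝ᵥ (diagonal d * A * diagonal d) *ᵥ x = (diagonal d *ᵥ x) ⬝ᵥ A *ᵥ (diagonal d *ᵥ x) := by
  have hx : x ᵥ* diagonal d = diagonal d *ᵥ x := funext fun i => by
    rw [vecMul_diagonal, mulVec_diagonal, mul_comm]
  rw [← mulVec_mulVec, ← mulVec_mulVec, dotProduct_mulVec, hx]

theorem mul_sq_le_of_diagonal_conj_mulVec_eq_smul (hm0 : 0 ≤ m)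
    (hm : ∀ x, m * (x ⬝ᵥ x) ≤ x ⬝ᵥ A *ᵥ x) {u : ι → ℝ} {μ : ℝ} (hu : u ⬝ᵥ u = 1)
    (hu_eig : (diagonal d * A * diagonal d) *ᵥ u = μ • u) (r : ι) :
    m * (d r * u r) ^ 2 ≤ μ := calc
  m * (d r * u r) ^ 2 ≤ m * ((diagonal d *ᵥ u) ⬝ᵥ (diagonal d *ᵥ u)) := by
    rw [← mulVec_diagonal]
    exact mul_le_mul_of_nonneg_left (sq_le_dotProduct_self _ r) hm0
  _ ≤ u ⬝ᵥ (diagonal d * A * diagonal d) *ᵥ u := by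
    rw [dotProduct_diagonal_conj_mulVec]
    exact hm _
  _ = μ := dotProduct_mulVec_eq_of_mulVec_eq_smul hu hu_eig

theorem mul_sq_le_mul_sq_of_diagonal_conj_mulVec_eq_smul
    (hM : ∀ x, (A *ᵥ x) ⬝ᵥ (A *ᵥ x) ≤ M * (x ⬝ᵥ A *ᵥ x)) {u : ι → ℝ} {μ : ℝ} (hμ : 0 < μ)
    (hu : u ⬝ᵥ u = 1) (hu_eig : (diagonal d * A * diagonal d) *ᵥ u = μ • u) (r : ι) :
    μ * u r ^ 2 ≤ M * d r ^ 2 := by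
  let w := diagonal d *ᵥ u
  have hr : μ * u r = d r * (A *ᵥ w) r := by
    simpa [← mulVec_mulVec, mulVec_diagonal] using (congrFun hu_eig r).symm
  have hAw : (A *ᵥ w) ⬝ᵥ (A *ᵥ w) ≤ M * μ := by
    rw [← dotProduct_mulVec_eq_of_mulVec_eq_smul hu hu_eig, dotProduct_diagonal_conj_mulVec]
    exact hM w
  refine le_of_mul_le_mul_left ?_ hμ
  calc μ * (μ * u r ^ 2) = d r ^ 2 * (A *ᵥ w) r ^ 2 := by
        linear_combination (μ * u r + d r * (A *ᵥ w) r) * hr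
    _ ≤ d r ^ 2 * (M * μ) :=
        mul_le_mul_of_nonneg_left ((sq_le_dotProduct_self _ r).trans hAw) (sq_nonneg _)
    _ = μ * (M * d r ^ 2) := by ring

end DiagonalConj

section Ostrowski

variable {n : ℕ} {d : Fin n → ℝ} {A U : Matrix (Fin n) (Fin n) ℝ} {Λ : Fin n → ℝ} {m M : ℝ}

theorem mul_sq_le_eigenvalue_of_diagonal_conj (hd : Antitone d) (hd0 : ∀ i, 0 ≤ d i)
    (hm0 : 0 ≤ m) (hm : ∀ x, m * (x ⬝ᵥ x) ≤ x ⬝ᵥ A *ᵥ x) (hU : Uᵀ * U = 1)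
    (hNU : diagonal d * A * diagonal d * U = U * diagonal Λ) (hΛ : Antitone Λ) (t : Fin n) :
    m * d t ^ 2 ≤ Λ t := by
  obtain ⟨x, hx0, hxt, hxΛ⟩ := exists_dotProduct_mulVec_le_eigenvalue hU hNU hΛ t
  have hdx : d t ^ 2 * (x ⬝ᵥ x) ≤ (diagonal d *ᵥ x) ⬝ᵥ (diagonal d *ᵥ x) := by
    rw [diagonal_mulVec_dotProduct_self, dotProduct_self_eq_sum_sq, Finset.mul_sum]
    exact Finset.sum_mul_sq_le_sum_mul_sq fun i hi =>
      pow_le_pow_left₀ (hd0 t) (hd (not_lt.1 fun h => hi (hxt i h))) 2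
  refine le_of_mul_le_mul_right ?_ (dotProduct_self_pos hx0)
  calc m * d t ^ 2 * (x ⬝ᵥ x) ≤ m * ((diagonal d *ᵥ x) ⬝ᵥ (diagonal d *ᵥ x)) := by
        rw [mul_assoc]
        exact mul_le_mul_of_nonneg_left hdx hm0
    _ ≤ x ⬝ᵥ (diagonal d * A * diagonal d) *ᵥ x := by
        rw [dotProduct_diagonal_conj_mulVec]
        exact hm _
    _ ≤ Λ t * (x ⬝ᵥ x) := hxΛ

theorem eigenvalue_le_mul_sq_of_diagonal_conj (hd : Antitone d) (hd0 : ∀ i, 0 ≤ d i)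
    (hM0 : 0 ≤ M) (hM : ∀ x, x ⬝ᵥ A *ᵥ x ≤ M * (x ⬝ᵥ x)) (hU : Uᵀ * U = 1)
    (hNU : diagonal d * A * diagonal d * U = U * diagonal Λ) (hΛ : Antitone Λ) (t : Fin n) :
    Λ t ≤ M * d t ^ 2 := by
  obtain ⟨x, hx0, hxt, hxΛ⟩ := exists_eigenvalue_le_dotProduct_mulVec hU hNU hΛ t
  have hdx : (diagonal d *ᵥ x) ⬝ᵥ (diagonal d *ᵥ x) ≤ d t ^ 2 * (x ⬝ᵥ x) := by
    rw [diagonal_mulVec_dotProduct_self, dotProduct_self_eq_sum_sq, Finset.mul_sum]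
    exact Finset.sum_mul_sq_le_sum_mul_sq fun i hi =>
      pow_le_pow_left₀ (hd0 i) (hd (not_lt.1 fun h => hi (hxt i h))) 2
  refine le_of_mul_le_mul_right ?_ (dotProduct_self_pos hx0)
  calc Λ t * (x ⬝ᵥ x) ≤ x ⬝ᵥ (diagonal d * A * diagonal d) *ᵥ x := hxΛ
    _ ≤ M * ((diagonal d *ᵥ x) ⬝ᵥ (diagonal d *ᵥ x)) := by
        rw [dotProduct_diagonal_conj_mulVec]
        exact hM _
    _ ≤ M * d t ^ 2 * (x ⬝ᵥ x) := by
        rw [mul_assoc]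
        exact mul_le_mul_of_nonneg_left hdx hM0

end Ostrowski

end Matrix

section EigsDesc

variable {n : ℕ} {A : Matrix (Fin n) (Fin n) ℝ} (hA : A.IsHermitian)
include hA

theorem eigsDesc_antitone : Antitone (eigsDesc hA) := fun _ _ hab =>
  Tuple.monotone_sort hA.eigenvalues (Fin.rev_le_rev.mpr hab)

theorem exists_eigsDesc_eq (i : Fin n) : ∃ k, eigsDesc hA k = hA.eigenvalues i :=
  ⟨((Tuple.sort hA.eigenvalues).symm i).rev, by simp [eigsDesc]⟩

theorem eigsDesc_last_le (hn : 0 < n) (i : Fin n) :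
    eigsDesc hA ⟨n - 1, Nat.sub_lt hn one_pos⟩ ≤ hA.eigenvalues i := by
  obtain ⟨k, hk⟩ := exists_eigsDesc_eq hA i
  exact hk ▸ eigsDesc_antitone hA (Fin.mk_le_mk.2 (by omega) : k ≤ _)

theorem eigenvalues_le_eigsDesc_zero (hn : 0 < n) (i : Fin n) :
    hA.eigenvalues i ≤ eigsDesc hA ⟨0, hn⟩ := by
  obtain ⟨k, hk⟩ := exists_eigsDesc_eq hA i
  exact hk ▸ eigsDesc_antitone hA (Fin.mk_le_mk.2 (Nat.zero_le _) : ⟨0, hn⟩ ≤ k)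

end EigsDesc

theorem abs_le_div_of_mul_sq_le {m M a b x : ℝ} (hm : 0 < m) (hmM : m ≤ M) (ha : 0 < a)
    (hb : 0 ≤ b) (h : m * (a * x) ^ 2 ≤ M * b ^ 2) : |x| ≤ M / m * b / a := by
  have hκ : 1 ≤ M / m := (one_le_div hm).2 hmM
  rw [le_div_iff₀ ha, ← abs_of_pos ha, ← abs_mul, mul_comm]
  refine abs_le_of_sq_le_sq ?_ (by positivity)
  calc (a * x) ^ 2 ≤ M / m * b ^ 2 := by
        rw [div_mul_eq_mul_div, le_div_iff₀ hm]
        linarith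
    _ ≤ (M / m * b) ^ 2 := by nlinarith [sq_nonneg b]

theorem stmt9 (K : ℕ) (hK : 0 < K)
    (d : Fin K → ℝ) (hd : Antitone d) (hd0 : ∀ i, 0 ≤ d i)
    (A : Matrix (Fin K) (Fin K) ℝ) (hA : A.PosDef)
    (κ : ℝ)
    (hκ : κ = eigsDesc hA.1 ⟨0, hK⟩ / eigsDesc hA.1 ⟨K - 1, Nat.sub_lt hK one_pos⟩)
    (U : Matrix (Fin K) (Fin K) ℝ) (hU : Uᵀ * U = 1)
    (hDAD : (Matrix.diagonal d * A * Matrix.diagonal d).IsHermitian)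
    (hUeig : ∀ s : Fin K,
      (Matrix.diagonal d * A * Matrix.diagonal d).mulVec (fun i => U i s)
        = eigsDesc hDAD s • (fun i => U i s)) :
    ∀ r s : Fin K, 0 < d (min r s) → |U r s| ≤ κ * d (max r s) / d (min r s) := by
  intro r s hmin
  set m := eigsDesc hA.1 ⟨K - 1, Nat.sub_lt hK one_pos⟩
  set M := eigsDesc hA.1 ⟨0, hK⟩
  have hm0 : 0 < m := hA.eigenvalues_pos _
  have hmA := hA.1.mul_dotProduct_self_le (eigsDesc_last_le hA.1 hK)
  have hAM := hA.1.dotProduct_mulVec_le (eigenvalues_le_eigsDesc_zero hA.1 hK)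
  have hAAM := hA.1.mulVec_dotProduct_mulVec_le (fun i => (hA.eigenvalues_pos i).le)
    (eigenvalues_le_eigsDesc_zero hA.1 hK)
  have hmM : m ≤ M := (eigsDesc_last_le hA.1 hK ⟨0, hK⟩).trans
    (eigenvalues_le_eigsDesc_zero hA.1 hK ⟨0, hK⟩)
  have hNU := mul_eq_mul_diagonal_of_mulVec_col hUeig
  have hΛ := eigsDesc_antitone hDAD
  have hentry : m * (d (min r s) * U r s) ^ 2 ≤ M * d (max r s) ^ 2 := by
    rcases le_total r s with h | h
    · rw [min_eq_left h, max_eq_right h]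
      exact (mul_sq_le_of_diagonal_conj_mulVec_eq_smul hm0.le hmA
        (col_dotProduct_col_of_orthogonal hU s) (hUeig s) r).trans
        (eigenvalue_le_mul_sq_of_diagonal_conj hd hd0 (hm0.le.trans hmM) hAM hU hNU hΛ s)
    · rw [min_eq_right h, max_eq_left h]
      have hΛs := mul_sq_le_eigenvalue_of_diagonal_conj hd hd0 hm0.le hmA hU hNU hΛ s
      calc m * (d s * U r s) ^ 2 = m * d s ^ 2 * U r s ^ 2 := by ring
        _ ≤ eigsDesc hDAD s * U r s ^ 2 := mul_le_mul_of_nonneg_right hΛs (sq_nonneg _)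
        _ ≤ M * d r ^ 2 := mul_sq_le_mul_sq_of_diagonal_conj_mulVec_eq_smul hAAM
            ((mul_pos hm0 (pow_pos (min_eq_right h ▸ hmin) 2)).trans_le hΛs)
            (col_dotProduct_col_of_orthogonal hU s) (hUeig s) r
  exact hκ ▸ abs_le_div_of_mul_sq_le hm0 hmM hmin (hd0 _) hentry
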